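/- arXiv:2102.13308 — 4 statements merged into one kernel-verified Lean document; each statement's English description precedes it below -/
import Mathlib

section
/- Let β₀, β₁ be real numbers, λ₀, λ₁ > 0, γ₀, γ₁ ≠ 0, and let b₀, b₁ be the two roots b_{0,1} = (1/2)(β₀ + β₁ ± √((β₀-β₁)² + 4λ₀λ₁/(γ₀γ₁))) (assuming the discriminant is nonnegative). Then the sequences A_n = (λ₀/(q+λ₀))·((b₀)_n(b₁)_n)/((1+β₀)_n n!)·B₀ and B_n = ((b₀)_n(b₁)_n)/((β₀)_n n!)·B₀, where (b)_n denotes the Pochhammer symbol, satisfy the coupled recursion n·A_n = -β₀A_n + (λ₀/γ₀)B_n and n·B_n - (n+1)B_{n+1} = (λ₁/γ₁)A_n - β₁B_n for all n ≥ 0, where β₀ = (q+λ₀)/γ₀ and β₁ = (q+λ₁)/γ₁. -/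
open Polynomial

/-- The hypergeometric-type coefficients
`A_n = (λ₀/(q+λ₀)) (b₀)_n (b₁)_n / ((1+β₀)_n n!) B₀` and
`B_n = (b₀)_n (b₁)_n / ((β₀)_n n!) B₀`, with `b₀, b₁` the roots
`(1/2)(β₀+β₁ ± √((β₀-β₁)² + 4λ₀λ₁/(γ₀γ₁)))`, `β₀ = (q+λ₀)/γ₀`, `β₁ = (q+λ₁)/γ₁`,
satisfy the coupled recursion `n A_n = -β₀ A_n + (λ₀/γ₀) B_n` and
`n B_n - (n+1) B_{n+1} = (λ₁/γ₁) A_n - β₁ B_n` for all `n ≥ 0`. -/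
theorem kac_ou_hypergeometric_recursion (q l0 l1 γ0 γ1 B₀ : ℝ)
    (hq : 0 < q) (hl0 : 0 < l0) (hl1 : 0 < l1) (hγ0 : γ0 ≠ 0) (hγ1 : γ1 ≠ 0)
    (β0 β1 : ℝ) (hβ0 : β0 = (q + l0) / γ0) (hβ1 : β1 = (q + l1) / γ1)
    (hdisc : 0 ≤ (β0 - β1) ^ 2 + 4 * l0 * l1 / (γ0 * γ1))
    (hβ0int : ∀ k : ℕ, β0 ≠ -(k : ℝ))
    (b0 b1 : ℝ)
    (hb0 : b0 = (1 / 2) * (β0 + β1 + Real.sqrt ((β0 - β1) ^ 2 + 4 * l0 * l1 / (γ0 * γ1))))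
    (hb1 : b1 = (1 / 2) * (β0 + β1 - Real.sqrt ((β0 - β1) ^ 2 + 4 * l0 * l1 / (γ0 * γ1))))
    (A B : ℕ → ℝ)
    (hA : ∀ n, A n = (l0 / (q + l0)) *
        ((ascPochhammer ℝ n).eval b0 * (ascPochhammer ℝ n).eval b1) /
          ((ascPochhammer ℝ n).eval (1 + β0) * (Nat.factorial n : ℝ)) * B₀)
    (hB : ∀ n, B n = ((ascPochhammer ℝ n).eval b0 * (ascPochhammer ℝ n).eval b1) /
          ((ascPochhammer ℝ n).eval β0 * (Nat.factorial n : ℝ)) * B₀) :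
    ∀ n : ℕ,
      (n : ℝ) * A n = -β0 * A n + (l0 / γ0) * B n ∧
      (n : ℝ) * B n - ((n : ℝ) + 1) * B (n + 1) = (l1 / γ1) * A n - β1 * B n := by
  have hql0 : q + l0 ≠ 0 := by positivity
  have hβ0γ : β0 * γ0 = q + l0 := by rw [hβ0]; field_simp
  have hβ1γ : β1 * γ1 = q + l1 := by rw [hβ1]; field_simp
  have hs : Real.sqrt ((β0 - β1) ^ 2 + 4 * l0 * l1 / (γ0 * γ1)) ^ 2
      = (β0 - β1) ^ 2 + 4 * l0 * l1 / (γ0 * γ1) := Real.sq_sqrt hdisc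
  have hsum : b0 + b1 = β0 + β1 := by rw [hb0, hb1]; ring
  have hprod : γ0 * γ1 * (b0 * b1) = γ0 * γ1 * (β0 * β1) - l0 * l1 := by
    have h4 : γ0 * γ1 * (4 * l0 * l1 / (γ0 * γ1)) = 4 * l0 * l1 := by field_simp
    rw [hb0, hb1]
    linear_combination (- (γ0 * γ1) / 4) * hs - h4 / 4
  have hne : ∀ k : ℕ, β0 + (k : ℝ) ≠ 0 := by
    intro k h
    exact hβ0int k (by linarith)
  have hE1 : ∀ m : ℕ, (ascPochhammer ℝ m).eval β0 ≠ 0 := by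
    intro m
    induction m with
    | zero => simp
    | succ m ih =>
      rw [ascPochhammer_succ_eval]
      exact mul_ne_zero ih (hne m)
  have hkey : ∀ m : ℕ, β0 * (ascPochhammer ℝ m).eval (1 + β0)
      = (ascPochhammer ℝ m).eval β0 * (β0 + m) := by
    intro m
    have h1 : (ascPochhammer ℝ (m + 1)).eval β0
        = β0 * (ascPochhammer ℝ m).eval (β0 + 1) := by
      rw [ascPochhammer_succ_left, eval_mul, eval_X, eval_comp, eval_add, eval_X, eval_one]
    rw [add_comm 1 β0, ← h1, ascPochhammer_succ_eval]
  have hE2 : ∀ m : ℕ, (ascPochhammer ℝ m).eval (1 + β0) ≠ 0 := by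
    intro m
    have hβ0ne : β0 ≠ 0 := by simpa using hne 0
    intro h
    have := hkey m
    rw [h, mul_zero] at this
    exact mul_ne_zero (hE1 m) (hne m) this.symm
  intro n
  have hfac : (Nat.factorial n : ℝ) ≠ 0 := Nat.cast_ne_zero.mpr n.factorial_ne_zero
  have hβ0ne : β0 ≠ 0 := by simpa using hne 0
  -- first equation
  have hE2eq : (ascPochhammer ℝ n).eval (1 + β0)
      = (ascPochhammer ℝ n).eval β0 * (β0 + n) / β0 :=
    eq_div_of_mul_eq hβ0ne (by linear_combination hkey n)
  have h1 : (β0 + n) * A n = (l0 / γ0) * B n := by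
    rw [hA, hB, hE2eq, ← hβ0γ]
    field_simp [hβ0ne, hne n, hγ0, hE1 n, hfac]
  refine ⟨by linear_combination h1, ?_⟩
  -- step relation for B
  have h2 : (β0 + n) * (((n : ℝ) + 1) * B (n + 1)) = ((n : ℝ) + b0) * ((n : ℝ) + b1) * B n := by
    have hn1 : ((n : ℝ) + 1) ≠ 0 := by positivity
    rw [hB (n + 1), hB n, ascPochhammer_succ_eval, ascPochhammer_succ_eval,
      ascPochhammer_succ_eval, Nat.factorial_succ]
    push_cast
    field_simp [hE1 n, hne n]
    ring
  -- second equation, multiplied by γ0 γ1 (β0 + n)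
  have hA1 : γ1 * (l1 / γ1) = l1 := by field_simp
  have hA0 : γ0 * (l0 / γ0) = l0 := by field_simp
  have key : γ0 * γ1 * (β0 + n) * ((n : ℝ) * B n - ((n : ℝ) + 1) * B (n + 1))
      = γ0 * γ1 * (β0 + n) * ((l1 / γ1) * A n - β1 * B n) := by
    linear_combination (-(γ0 * γ1)) * h2 + (-(γ0 * γ1 * (l1 / γ1))) * h1
      + (-(γ0 * (l0 / γ0) * B n)) * hA1 + (-(l1 * B n)) * hA0
      + (-(γ0 * γ1 * (n : ℝ) * B n)) * hsum + (-(B n)) * hprod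
  exact mul_left_cancel₀ (by exact mul_ne_zero (mul_ne_zero hγ0 hγ1) (hne n)) key
end

section
/- Let γ₀, γ₁ > 0, λ₀, λ₁ > 0, ρ₀ < ρ₁, α₀ = λ₀/γ₀, α₁ = λ₁/γ₁, and define π₀(x) = c·γ₀⁻¹(x-ρ₀)^{α₀-1}(ρ₁-x)^{α₁} and π₁(x) = c·γ₁⁻¹(x-ρ₀)^{α₀}(ρ₁-x)^{α₁-1} for ρ₀ < x < ρ₁. Then π₀, π₁ satisfy the system (γ₀x - γ₀ρ₀)π₀'(x) = (λ₀-γ₀)π₀(x) - λ₁π₁(x) and (γ₁x - γ₁ρ₁)π₁'(x) = -λ₀π₀(x) + (λ₁-γ₁)π₁(x) on (ρ₀, ρ₁). -/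
/-- In the attracting-only case `γ₀, γ₁ > 0`, the densities
`π₀(x) = c γ₀⁻¹ (x-ρ₀)^{α₀-1}(ρ₁-x)^{α₁}` and `π₁(x) = c γ₁⁻¹ (x-ρ₀)^{α₀}(ρ₁-x)^{α₁-1}`
satisfy the stationary Fokker–Planck system
`γ₀(x-ρ₀) π₀'(x) = (λ₀-γ₀)π₀(x) - λ₁π₁(x)` and
`γ₁(x-ρ₁) π₁'(x) = -λ₀π₀(x) + (λ₁-γ₁)π₁(x)` on `(ρ₀, ρ₁)`. -/
theorem kac_ou_invariant_density_system (γ0 γ1 l0 l1 ρ0 ρ1 c : ℝ)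
    (hγ0 : 0 < γ0) (hγ1 : 0 < γ1) (hl0 : 0 < l0) (hl1 : 0 < l1)
    (hρ : ρ0 < ρ1) (hc : 0 < c)
    (α0 α1 : ℝ) (hα0 : α0 = l0 / γ0) (hα1 : α1 = l1 / γ1)
    (π0 π1 : ℝ → ℝ)
    (hπ0 : ∀ x, π0 x = c * γ0⁻¹ * (x - ρ0) ^ (α0 - 1) * (ρ1 - x) ^ α1)
    (hπ1 : ∀ x, π1 x = c * γ1⁻¹ * (x - ρ0) ^ α0 * (ρ1 - x) ^ (α1 - 1)) :
    ∀ x ∈ Set.Ioo ρ0 ρ1,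
      (γ0 * x - γ0 * ρ0) * deriv π0 x = (l0 - γ0) * π0 x - l1 * π1 x ∧
      (γ1 * x - γ1 * ρ1) * deriv π1 x = -l0 * π0 x + (l1 - γ1) * π1 x := by
  have hf0 : π0 = fun y => c * γ0⁻¹ * (y - ρ0) ^ (α0 - 1) * (ρ1 - y) ^ α1 := funext hπ0
  have hf1 : π1 = fun y => c * γ1⁻¹ * (y - ρ0) ^ α0 * (ρ1 - y) ^ (α1 - 1) := funext hπ1
  subst hf0 hf1 hα0 hα1
  intro x hx
  obtain ⟨hxl, hxr⟩ := hx
  have hx0 : (0:ℝ) < x - ρ0 := by linarith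
  have hx1 : (0:ℝ) < ρ1 - x := by linarith
  have hA : HasDerivAt (fun y : ℝ => y - ρ0) 1 x := (hasDerivAt_id x).sub_const ρ0
  have hB : HasDerivAt (fun y : ℝ => ρ1 - y) (-1) x := by
    simpa using (hasDerivAt_id x).const_sub ρ1
  have d0a : HasDerivAt (fun y : ℝ => (y - ρ0) ^ (l0/γ0 - 1))
      (1 * (l0/γ0 - 1) * (x - ρ0) ^ (l0/γ0 - 1 - 1)) x :=
    hA.rpow_const (Or.inl hx0.ne')
  have d0b : HasDerivAt (fun y : ℝ => (ρ1 - y) ^ (l1/γ1))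
      ((-1) * (l1/γ1) * (ρ1 - x) ^ (l1/γ1 - 1)) x :=
    hB.rpow_const (Or.inl hx1.ne')
  have d1a : HasDerivAt (fun y : ℝ => (y - ρ0) ^ (l0/γ0))
      (1 * (l0/γ0) * (x - ρ0) ^ (l0/γ0 - 1)) x :=
    hA.rpow_const (Or.inl hx0.ne')
  have d1b : HasDerivAt (fun y : ℝ => (ρ1 - y) ^ (l1/γ1 - 1))
      ((-1) * (l1/γ1 - 1) * (ρ1 - x) ^ (l1/γ1 - 1 - 1)) x :=
    hB.rpow_const (Or.inl hx1.ne')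
  have D0 : HasDerivAt (fun y => c * γ0⁻¹ * (y - ρ0) ^ (l0/γ0 - 1) * (ρ1 - y) ^ (l1/γ1))
      ((c * γ0⁻¹ * (1 * (l0/γ0 - 1) * (x - ρ0) ^ (l0/γ0 - 1 - 1))) * (ρ1 - x) ^ (l1/γ1)
        + (c * γ0⁻¹ * (x - ρ0) ^ (l0/γ0 - 1)) * ((-1) * (l1/γ1) * (ρ1 - x) ^ (l1/γ1 - 1))) x :=
    (d0a.const_mul (c * γ0⁻¹)).mul d0b
  have D1 : HasDerivAt (fun y => c * γ1⁻¹ * (y - ρ0) ^ (l0/γ0) * (ρ1 - y) ^ (l1/γ1 - 1))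
      ((c * γ1⁻¹ * (1 * (l0/γ0) * (x - ρ0) ^ (l0/γ0 - 1))) * (ρ1 - x) ^ (l1/γ1 - 1)
        + (c * γ1⁻¹ * (x - ρ0) ^ (l0/γ0)) * ((-1) * (l1/γ1 - 1) * (ρ1 - x) ^ (l1/γ1 - 1 - 1))) x :=
    (d1a.const_mul (c * γ1⁻¹)).mul d1b
  rw [D0.deriv, D1.deriv]
  have e1 : (x - ρ0) ^ (l0/γ0 - 1) = (x - ρ0) ^ (l0/γ0) / (x - ρ0) := by
    rw [Real.rpow_sub hx0, Real.rpow_one]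
  have e2 : (x - ρ0) ^ (l0/γ0 - 1 - 1) = (x - ρ0) ^ (l0/γ0) / (x - ρ0) / (x - ρ0) := by
    rw [Real.rpow_sub hx0, Real.rpow_sub hx0, Real.rpow_one]
  have e3 : (ρ1 - x) ^ (l1/γ1 - 1) = (ρ1 - x) ^ (l1/γ1) / (ρ1 - x) := by
    rw [Real.rpow_sub hx1, Real.rpow_one]
  have e4 : (ρ1 - x) ^ (l1/γ1 - 1 - 1) = (ρ1 - x) ^ (l1/γ1) / (ρ1 - x) / (ρ1 - x) := by
    rw [Real.rpow_sub hx1, Real.rpow_sub hx1, Real.rpow_one]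
  constructor <;>
  · simp only [e1, e2, e3, e4]
    field_simp
    ring
end

section
/- Let γ₀ > 0 > γ₁, λ₀, λ₁ > 0, α₀ = λ₀/γ₀ > 0 > α₁ = λ₁/γ₁ with α₀ + α₁ < 0, and ρ₀ < ρ₁. Then the integral ∫_{-∞}^{ρ₀} [γ₀⁻¹(ρ₀-x)^{α₀-1}(ρ₁-x)^{α₁} - γ₁⁻¹(ρ₀-x)^{α₀}(ρ₁-x)^{α₁-1}] dx converges and equals (ρ₁-ρ₀)^{α₀+α₁}[γ₀⁻¹B(-α₀-α₁, α₀) - γ₁⁻¹B(-α₀-α₁, 1+α₀)], where B is the beta function. -/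
/-!
The substitution `x = ρ₁ - (ρ₁ - ρ₀) / t` is an increasing bijection from `(0, 1)` onto
`(-∞, ρ₀)` with `ρ₀ - x = (ρ₁ - ρ₀)(1 - t)/t`, `ρ₁ - x = (ρ₁ - ρ₀)/t` and
`dx = (ρ₁ - ρ₀)/t² dt`. It turns `(ρ₀ - x)^(a-1) (ρ₁ - x)^b dx` into
`(ρ₁ - ρ₀)^(a+b) t^(-a-b-1) (1 - t)^(a-1) dt`, the beta integrand with parameters
`(-a-b, a)`, integrable when `a > 0` and `a + b < 0`. The two terms of the theorem are the
cases `(a, b) = (α₀, α₁)` and `(1 + α₀, α₁ - 1)`.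
-/

open MeasureTheory

/-- Euler's beta function `B(p,q) = ∫₀¹ t^{p-1}(1-t)^{q-1} dt`. -/
noncomputable def eulerBeta (p q : ℝ) : ℝ :=
  ∫ t in (0:ℝ)..1, t ^ (p - 1) * (1 - t) ^ (q - 1)

open Set

lemma integrableOn_beta_integrand {p q : ℝ} (hp : 0 < p) (hq : 0 < q) :
    IntegrableOn (fun t : ℝ => t ^ (p - 1) * (1 - t) ^ (q - 1)) (Ioo 0 1) := by
  have hC : IntegrableOn (fun t : ℝ => (t : ℂ) ^ ((p : ℂ) - 1) * (1 - (t : ℂ)) ^ ((q : ℂ) - 1))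
      (Ioo 0 1) :=
    ((intervalIntegrable_iff_integrableOn_Ioc_of_le zero_le_one).mp
      (Complex.betaIntegral_convergent (by simpa using hp) (by simpa using hq))).mono_set
      Ioo_subset_Ioc_self
  have hR : IntegrableOn (fun t : ℝ => ((t ^ (p - 1) * (1 - t) ^ (q - 1) : ℝ) : ℂ)) (Ioo 0 1) := by
    refine hC.congr_fun (fun t ht => ?_) measurableSet_Ioo
    rw [Complex.ofReal_mul, Complex.ofReal_cpow ht.1.le, Complex.ofReal_cpow (sub_nonneg.2 ht.2.le)]
    push_cast
    rfl
  simpa [IntegrableOn] using hR.re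

lemma eulerBeta_eq_setIntegral_Ioo (p q : ℝ) :
    eulerBeta p q = ∫ t in Ioo (0:ℝ) 1, t ^ (p - 1) * (1 - t) ^ (q - 1) := by
  rw [eulerBeta, intervalIntegral.integral_of_le zero_le_one, integral_Ioc_eq_integral_Ioo]

section Substitution

variable {d : ℝ}

lemma hasDerivAt_const_sub_div (c d : ℝ) {t : ℝ} (ht : t ≠ 0) :
    HasDerivAt (fun t => c - d / t) (d / t ^ 2) t := by
  have h := ((hasDerivAt_inv ht).const_mul d).const_sub c
  rw [show d / t ^ 2 = -(d * -(t ^ 2)⁻¹) by ring]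
  simpa only [div_eq_mul_inv] using h

lemma monotoneOn_const_sub_div (c : ℝ) (hd : 0 ≤ d) : MonotoneOn (fun t => c - d / t) (Ioi 0) :=
  fun _ ha _ _ hab => sub_le_sub_left (div_le_div_of_nonneg_left hd ha hab) c

lemma image_const_sub_div_Ioo (c : ℝ) (hd : 0 < d) :
    (fun t => c - d / t) '' Ioo 0 1 = Iio (c - d) := by
  ext x
  constructor
  · rintro ⟨t, ⟨ht0, ht1⟩, rfl⟩
    have : d < d / t := (lt_div_iff₀ ht0).2 (by nlinarith)
    exact sub_lt_sub_left this c
  · intro hx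
    have hcx : d < c - x := by linarith [mem_Iio.1 hx]
    have hcx0 : 0 < c - x := hd.trans hcx
    refine ⟨d / (c - x), ⟨div_pos hd hcx0, (div_lt_one hcx0).2 hcx⟩, ?_⟩
    simp [div_div_cancel₀ hd.ne']

lemma integrableOn_Iio_iff_comp_const_sub_div (c : ℝ) (hd : 0 < d) (f : ℝ → ℝ) :
    IntegrableOn f (Iio (c - d)) ↔
      IntegrableOn (fun t => d / t ^ 2 * f (c - d / t)) (Ioo 0 1) := by
  rw [← image_const_sub_div_Ioo c hd]
  exact integrableOn_image_iff_integrableOn_deriv_smul_of_monotoneOn measurableSet_Ioo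
    (fun t ht => (hasDerivAt_const_sub_div c d ht.1.ne').hasDerivWithinAt)
    ((monotoneOn_const_sub_div c hd.le).mono Ioo_subset_Ioi_self) f

lemma integral_Iio_eq_integral_comp_const_sub_div (c : ℝ) (hd : 0 < d) (f : ℝ → ℝ) :
    ∫ x in Iio (c - d), f x = ∫ t in Ioo 0 1, d / t ^ 2 * f (c - d / t) := by
  rw [← image_const_sub_div_Ioo c hd]
  exact integral_image_eq_integral_deriv_smul_of_monotoneOn measurableSet_Ioo
    (fun t ht => (hasDerivAt_const_sub_div c d ht.1.ne').hasDerivWithinAt)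
    ((monotoneOn_const_sub_div c hd.le).mono Ioo_subset_Ioi_self) f

end Substitution

section BetaSubstitution

variable {ρ0 ρ1 : ℝ}

lemma rpow_mul_rpow_comp_const_sub_div (a b : ℝ) (hρ : ρ0 < ρ1) {t : ℝ} (ht : t ∈ Ioo (0:ℝ) 1) :
    (ρ1 - ρ0) / t ^ 2 *
        ((ρ0 - (ρ1 - (ρ1 - ρ0) / t)) ^ (a - 1) * (ρ1 - (ρ1 - (ρ1 - ρ0) / t)) ^ b) =
      (ρ1 - ρ0) ^ (a + b) * (t ^ (-a - b - 1) * (1 - t) ^ (a - 1)) := by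
  set d := ρ1 - ρ0
  have hd : 0 < d := sub_pos.2 hρ
  obtain ⟨ht0, ht1⟩ := ht
  have h1t : 0 < 1 - t := sub_pos.2 ht1
  rw [show ρ0 - (ρ1 - d / t) = d * (1 - t) / t by field_simp; ring, sub_sub_cancel,
    Real.div_rpow (by positivity) ht0.le, Real.mul_rpow hd.le h1t.le, Real.div_rpow hd.le ht0.le,
    Real.rpow_sub hd, Real.rpow_sub ht0, Real.rpow_sub h1t, Real.rpow_add hd,
    Real.rpow_sub ht0, Real.rpow_sub ht0, Real.rpow_neg ht0.le, Real.rpow_one, Real.rpow_one,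
    Real.rpow_one]
  field_simp

lemma integrableOn_Iio_rpow_mul_rpow {a b : ℝ} (hρ : ρ0 < ρ1) (ha : 0 < a) (hab : a + b < 0) :
    IntegrableOn (fun x => (ρ0 - x) ^ (a - 1) * (ρ1 - x) ^ b) (Iio ρ0) := by
  have h := integrableOn_Iio_iff_comp_const_sub_div ρ1 (sub_pos.2 hρ)
    (fun x => (ρ0 - x) ^ (a - 1) * (ρ1 - x) ^ b)
  rw [sub_sub_cancel] at h
  rw [h]
  refine IntegrableOn.congr_fun ?_ (fun t ht => (rpow_mul_rpow_comp_const_sub_div a b hρ ht).symm)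
    measurableSet_Ioo
  exact (integrableOn_beta_integrand (by linarith) ha).const_mul _

lemma integral_Iio_rpow_mul_rpow (a b : ℝ) (hρ : ρ0 < ρ1) :
    ∫ x in Iio ρ0, (ρ0 - x) ^ (a - 1) * (ρ1 - x) ^ b =
      (ρ1 - ρ0) ^ (a + b) * eulerBeta (-a - b) a := by
  have h := integral_Iio_eq_integral_comp_const_sub_div ρ1 (sub_pos.2 hρ)
    (fun x => (ρ0 - x) ^ (a - 1) * (ρ1 - x) ^ b)
  rw [sub_sub_cancel] at h
  rw [h, setIntegral_congr_fun measurableSet_Ioo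
    (fun t ht => rpow_mul_rpow_comp_const_sub_div a b hρ ht), integral_const_mul,
    eulerBeta_eq_setIntegral_Ioo]

end BetaSubstitution

theorem kac_ou_attraction_repulsion_normalizing_general (γ0 γ1 l0 ρ0 ρ1 : ℝ)
    (hγ0 : 0 < γ0) (hl0 : 0 < l0) (hρ : ρ0 < ρ1)
    (α0 α1 : ℝ) (hα0 : α0 = l0 / γ0) (hsum : α0 + α1 < 0) :
    IntegrableOn
      (fun x => γ0⁻¹ * (ρ0 - x) ^ (α0 - 1) * (ρ1 - x) ^ α1 -
                γ1⁻¹ * (ρ0 - x) ^ α0 * (ρ1 - x) ^ (α1 - 1))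
      (Set.Iio ρ0) ∧
    (∫ x in Set.Iio ρ0,
        (γ0⁻¹ * (ρ0 - x) ^ (α0 - 1) * (ρ1 - x) ^ α1 -
         γ1⁻¹ * (ρ0 - x) ^ α0 * (ρ1 - x) ^ (α1 - 1))) =
      (ρ1 - ρ0) ^ (α0 + α1) *
        (γ0⁻¹ * eulerBeta (-α0 - α1) α0 - γ1⁻¹ * eulerBeta (-α0 - α1) (1 + α0)) := by
  have hα0_pos : 0 < α0 := hα0 ▸ div_pos hl0 hγ0
  have h0 := integrableOn_Iio_rpow_mul_rpow hρ hα0_pos hsum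
  have h1 := integrableOn_Iio_rpow_mul_rpow (a := 1 + α0) (b := α1 - 1) hρ (by linarith)
    (by linarith)
  have e1 := integral_Iio_rpow_mul_rpow (1 + α0) (α1 - 1) hρ
  rw [add_sub_cancel_left] at h1 e1
  rw [show 1 + α0 + (α1 - 1) = α0 + α1 by ring, show -(1 + α0) - (α1 - 1) = -α0 - α1 by ring] at e1
  simp only [mul_assoc]
  refine ⟨(h0.const_mul _).sub (h1.const_mul _), ?_⟩
  rw [integral_sub (h0.const_mul _) (h1.const_mul _), integral_const_mul, integral_const_mul, e1,
    integral_Iio_rpow_mul_rpow _ _ hρ]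
  ring

/-- In the attraction–repulsion case `γ₀ > 0 > γ₁`, `α₀ = λ₀/γ₀ > 0 > α₁ = λ₁/γ₁`,
`α₀ + α₁ < 0`, the normalizing integral over `(-∞, ρ₀)` converges and
`∫_{-∞}^{ρ₀} [γ₀⁻¹(ρ₀-x)^{α₀-1}(ρ₁-x)^{α₁} - γ₁⁻¹(ρ₀-x)^{α₀}(ρ₁-x)^{α₁-1}] dx
  = (ρ₁-ρ₀)^{α₀+α₁}[γ₀⁻¹B(-α₀-α₁,α₀) - γ₁⁻¹B(-α₀-α₁,1+α₀)]`. -/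
theorem kac_ou_attraction_repulsion_normalizing (γ0 γ1 l0 l1 ρ0 ρ1 : ℝ)
    (hγ0 : 0 < γ0) (hγ1 : γ1 < 0) (hl0 : 0 < l0) (hl1 : 0 < l1) (hρ : ρ0 < ρ1)
    (α0 α1 : ℝ) (hα0 : α0 = l0 / γ0) (hα1 : α1 = l1 / γ1) (hsum : α0 + α1 < 0) :
    IntegrableOn
      (fun x => γ0⁻¹ * (ρ0 - x) ^ (α0 - 1) * (ρ1 - x) ^ α1 -
                γ1⁻¹ * (ρ0 - x) ^ α0 * (ρ1 - x) ^ (α1 - 1))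
      (Set.Iio ρ0) ∧
    (∫ x in Set.Iio ρ0,
        (γ0⁻¹ * (ρ0 - x) ^ (α0 - 1) * (ρ1 - x) ^ α1 -
         γ1⁻¹ * (ρ0 - x) ^ α0 * (ρ1 - x) ^ (α1 - 1))) =
      (ρ1 - ρ0) ^ (α0 + α1) *
        (γ0⁻¹ * eulerBeta (-α0 - α1) α0 - γ1⁻¹ * eulerBeta (-α0 - α1) (1 + α0)) :=
  kac_ou_attraction_repulsion_normalizing_general γ0 γ1 l0 ρ0 ρ1 hγ0 hl0 hρ α0 α1 hα0 hsum
end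

section
/- Let γ₀ > 0, λ₀, λ₁ > 0, α = λ₀/γ₀, ρ ∈ ℝ, C > 0, and define π₀(x) = C(x-ρ)^{α-1}e^{-λ₁(x-ρ)}, π₁(x) = γ₀C(x-ρ)^{α}e^{-λ₁(x-ρ)} for x > ρ. Then on (ρ, ∞): (x-ρ)γ₀π₀'(x) = (λ₀-γ₀)π₀(x) - λ₁π₁(x) and -π₁'(x) = -λ₀π₀(x) + λ₁π₁(x). -/
/-!
Both densities are of the form `c (x-ρ)^β e^{-λ₁(x-ρ)}`, whose logarithmic derivative is
`β/(x-ρ) - λ₁`; moreover `π₁ = γ₀ (x-ρ) π₀`. Substituting these two facts, both equations reduce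
to the identity `γ₀ α = λ₀`.
-/

open Real

noncomputable def shiftedGammaKernel (c β l ρ : ℝ) (x : ℝ) : ℝ :=
  c * (x - ρ) ^ β * exp (-l * (x - ρ))

theorem hasDerivAt_shiftedGammaKernel (c β l : ℝ) {ρ x : ℝ} (hx : ρ < x) :
    HasDerivAt (shiftedGammaKernel c β l ρ)
      ((β * (x - ρ)⁻¹ - l) * shiftedGammaKernel c β l ρ x) x := by
  have hu : x - ρ ≠ 0 := (sub_pos.2 hx).ne'
  have hsub : HasDerivAt (fun y : ℝ => y - ρ) 1 x := (hasDerivAt_id x).sub_const ρ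
  have hpow : HasDerivAt (fun y : ℝ => (y - ρ) ^ β) (1 * β * (x - ρ) ^ (β - 1)) x :=
    hsub.rpow_const (Or.inl hu)
  have hexp : HasDerivAt (fun y : ℝ => exp (-l * (y - ρ))) (exp (-l * (x - ρ)) * (-l * 1)) x :=
    (hasDerivAt_exp _).comp x (hsub.const_mul (-l))
  refine ((hpow.const_mul c).mul hexp).congr_deriv ?_
  rw [shiftedGammaKernel, rpow_sub_one hu]
  field_simp
  ring

theorem kac_ou_nonstrict_stationary_system_general (γ0 l0 l1 ρ C : ℝ)
    (hγ0 : 0 < γ0)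
    (α : ℝ) (hα : α = l0 / γ0)
    (π0 π1 : ℝ → ℝ)
    (hπ0 : ∀ x, π0 x = C * (x - ρ) ^ (α - 1) * Real.exp (-l1 * (x - ρ)))
    (hπ1 : ∀ x, π1 x = γ0 * C * (x - ρ) ^ α * Real.exp (-l1 * (x - ρ))) :
    ∀ x ∈ Set.Ioi ρ,
      (x - ρ) * γ0 * deriv π0 x = (l0 - γ0) * π0 x - l1 * π1 x ∧
      -deriv π1 x = -l0 * π0 x + l1 * π1 x := by
  intro x hx
  have hu : x - ρ ≠ 0 := (sub_pos.2 hx).ne'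
  have hγα : γ0 * α = l0 := by rw [hα]; field_simp
  obtain rfl : π0 = shiftedGammaKernel C (α - 1) l1 ρ := funext hπ0
  obtain rfl : π1 = shiftedGammaKernel (γ0 * C) α l1 ρ := funext hπ1
  have hπ1π0 : shiftedGammaKernel (γ0 * C) α l1 ρ x
      = γ0 * ((x - ρ) * shiftedGammaKernel C (α - 1) l1 ρ x) := by
    rw [shiftedGammaKernel, shiftedGammaKernel, rpow_sub_one hu]
    field_simp
  rw [(hasDerivAt_shiftedGammaKernel _ _ _ hx).deriv,
    (hasDerivAt_shiftedGammaKernel _ _ _ hx).deriv, hπ1π0]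
  constructor
  · field_simp
    linear_combination shiftedGammaKernel C (α - 1) l1 ρ x * hγα
  · field_simp
    linear_combination -(shiftedGammaKernel C (α - 1) l1 ρ x * hγα)

/-- The densities `π₀(x) = C(x-ρ)^{α-1}e^{-λ₁(x-ρ)}`, `π₁(x) = γ₀C(x-ρ)^{α}e^{-λ₁(x-ρ)}`
solve the stationary system for the non-strict attraction case (`γ₁ = 0`, `a₁ = +1`):
`γ₀(x-ρ) π₀'(x) = (λ₀-γ₀)π₀(x) - λ₁π₁(x)` and `-π₁'(x) = -λ₀π₀(x) + λ₁π₁(x)` on `(ρ, ∞)`. -/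
theorem kac_ou_nonstrict_stationary_system (γ0 l0 l1 ρ C : ℝ)
    (hγ0 : 0 < γ0) (hl0 : 0 < l0) (hl1 : 0 < l1) (hC : 0 < C)
    (α : ℝ) (hα : α = l0 / γ0)
    (π0 π1 : ℝ → ℝ)
    (hπ0 : ∀ x, π0 x = C * (x - ρ) ^ (α - 1) * Real.exp (-l1 * (x - ρ)))
    (hπ1 : ∀ x, π1 x = γ0 * C * (x - ρ) ^ α * Real.exp (-l1 * (x - ρ))) :
    ∀ x ∈ Set.Ioi ρ,
      (x - ρ) * γ0 * deriv π0 x = (l0 - γ0) * π0 x - l1 * π1 x ∧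
      -deriv π1 x = -l0 * π0 x + l1 * π1 x :=
  kac_ou_nonstrict_stationary_system_general γ0 l0 l1 ρ C hγ0 α hα π0 π1 hπ0 hπ1
end
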